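/- Let S be a shift-invariant subspace of L²(ℝ), n a positive integer, B_k = ⋃_{j∈ℤ}([k,k+1)+nj), and U_k = {f ∈ L²(ℝ) : f̂ = ĝ·χ_{B_k} for some g ∈ S}. Then the following are equivalent: (a) S is (1/n)ℤ-invariant; (b) U_k ⊆ S for k = 0,…,n−1; (c) for every f ∈ S, the function f^k defined by (f^k)^ = f̂·χ_{B_k} belongs to S for each k. Moreover, in that case S is the orthogonal direct sum S = U_0 ⊕ ⋯ ⊕ U_{n−1}. -/

import Mathlib

open MeasureTheory FourierTransform

noncomputable section

/-- The space `L²(ℝ)` of complex-valued square-integrable functions. -/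
abbrev L2 := Lp ℂ 2 (volume : Measure ℝ)

/-- The translation operator `T_a f (x) = f (x - a)` on `L²(ℝ)`. -/
def Tr (a : ℝ) : L2 → L2 :=
  Lp.compMeasurePreserving (fun x => x - a) (measurePreserving_sub_right volume a)

/-- `F` is the Fourier–Plancherel transform on `L²(ℝ)`: a unitary that agrees with the
classical Fourier integral `f̂(ω) = ∫ f(x) e^{-2πiωx} dx` on integrable functions. -/
def IsFourierTransform (F : L2 ≃ₗᵢ[ℂ] L2) : Prop :=
  ∀ f : L2, Integrable (f : ℝ → ℂ) volume → (F f : ℝ → ℂ) =ᵐ[volume] 𝓕 (f : ℝ → ℂ)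

/-- The shift-invariant space generated by `f`: the closed span of integer translates. -/
def SIS (f : L2) : Set L2 :=
  closure (Submodule.span ℂ {g : L2 | ∃ j : ℤ, g = Tr (j : ℝ) f} : Set L2)

/-- `B_k = ⋃_{j ∈ ℤ} ([k, k+1) + n j)`. -/
def Bset (n k : ℕ) : Set ℝ := {ω : ℝ | ∃ j : ℤ, ω - n * j ∈ Set.Ico (k : ℝ) ((k : ℝ) + 1)}

/-- `U_k = {f ∈ L² : f̂ = ĝ · χ_{B_k} for some g ∈ S}`. -/
def Uspace (F : L2 ≃ₗᵢ[ℂ] L2) (S : Set L2) (n k : ℕ) : Set L2 :=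
  {f : L2 | ∃ g ∈ S, (F f : ℝ → ℂ) =ᵐ[volume] (Bset n k).indicator (F g : ℝ → ℂ)}

/-!
Write `χ_k` for the indicator of `B_k` and `e_a(ω) = e^{-2πiaω}` for the Fourier symbol of
`T_a`. Integer shift invariance makes `S` invariant under every Fourier multiplier that is a
trigonometric polynomial of period 1; since `S` is closed, uniform approximation and dominated
convergence extend this to bounded pointwise limits of continuous 1-periodic functions, such as
`ω ↦ g (fract ω)` for continuous `g`. As `ω ∈ B_k` exactly when `⌊ω⌋ ≡ k (mod n)`, discrete
Fourier inversion on `ℤ/n` gives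
  `χ_k(ω) = (1/n) ∑_j e^{2πijk/n} e^{2πi(j/n) fract ω} e_{j/n}(ω)`,
  `e_{j/n}(ω) = ∑_k e^{-2πijk/n} e^{-2πi(j/n) fract ω} χ_k(ω)`,
so `S` is invariant under every `χ_k` iff it is invariant under every `e_{j/n}`, i.e. under the
shifts `T_{j/n}`. Invariance under `χ_k` is (b), equivalently (c), and the decomposition is
`f̂ = ∑_k χ_k f̂`, orthogonal because the `B_k` are disjoint.
-/

open Filter Topology
open scoped ENNReal

theorem Set.indicator_one_mul {α M₀ : Type*} [MulZeroOneClass M₀] (s : Set α) (v : α → M₀) :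
    s.indicator 1 * v = s.indicator v := by
  ext x
  simp [← Set.indicator_mul_left]

section DominatedConvergence

variable {α E : Type*} [MeasurableSpace α] {μ : Measure α} [NormedAddCommGroup E] {p : ℝ≥0∞}

theorem MeasureTheory.tendsto_eLpNorm_of_dominated (hp : p ≠ ∞) {g : ℕ → α → E}
    (hg : ∀ N, AEStronglyMeasurable (g N) μ) {b : α → ℝ} (hb : MemLp b p μ)
    (hbound : ∀ N, ∀ᵐ x ∂μ, ‖g N x‖ ≤ b x) (hlim : ∀ᵐ x ∂μ, Tendsto (g · x) atTop (𝓝 0)) :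
    Tendsto (fun N => eLpNorm (g N) p μ) atTop (𝓝 0) := by
  rcases eq_or_ne p 0 with rfl | hp0
  · simpa only [eLpNorm_exponent_zero] using tendsto_const_nhds
  have hpr : 0 < p.toReal := ENNReal.toReal_pos hp0 hp
  suffices Tendsto (fun N => ∫⁻ x, ‖g N x‖ₑ ^ p.toReal ∂μ) atTop (𝓝 0) by
    simp only [eLpNorm_eq_lintegral_rpow_enorm_toReal hp0 hp]
    have := (ENNReal.continuous_rpow_const (y := 1 / p.toReal).tendsto 0).comp this
    rwa [ENNReal.zero_rpow_of_pos (one_div_pos.mpr hpr)] at this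
  have hfin : ∫⁻ x, ‖b x‖ₑ ^ p.toReal ∂μ ≠ ∞ :=
    (lintegral_rpow_enorm_lt_top_of_eLpNorm_lt_top hp0 hp hb.eLpNorm_lt_top).ne
  simpa using
    tendsto_lintegral_of_dominated_convergence' (f := fun _ => 0) _
      (fun N => (hg N).enorm.pow_const _)
      (fun N => (hbound N).mono fun x hx =>
        ENNReal.rpow_le_rpow (enorm_le_iff_norm_le.mpr (hx.trans (Real.le_norm_self _))) hpr.le)
      hfin
      (hlim.mono fun x hx => by
        have := (ENNReal.continuous_rpow_const (y := p.toReal).tendsto _).comp hx.enorm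
        rwa [enorm_zero, ENNReal.zero_rpow_of_pos hpr] at this)

end DominatedConvergence

section Multiplier

variable {α E : Type*} [MeasurableSpace α] {μ : Measure α} {p : ℝ≥0∞} [Fact (1 ≤ p)]
  [NormedAddCommGroup E] [NormedSpace ℂ E]

def MultiplierInvariant (F : E ≃ₗᵢ[ℂ] Lp ℂ p μ) (S : Submodule ℂ E) (m : α → ℂ) : Prop :=
  ∀ f ∈ S, ∃ g ∈ S, (F g : α → ℂ) =ᵐ[μ] m * F f

variable {F : E ≃ₗᵢ[ℂ] Lp ℂ p μ} {S : Submodule ℂ E} {m m₁ m₂ : α → ℂ}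

theorem LinearIsometryEquiv.exists_coeFn_eq_mul (F : E ≃ₗᵢ[ℂ] Lp ℂ p μ) (hm : MemLp m ∞ μ)
    (f : E) : ∃ g, (F g : α → ℂ) =ᵐ[μ] m * F f :=
  ⟨F.symm (((Lp.memLp (F f)).mul hm).toLp _), by
    rw [F.apply_symm_apply]; exact MemLp.coeFn_toLp _⟩

theorem MultiplierInvariant.mem (h : MultiplierInvariant F S m) {f g : E} (hf : f ∈ S)
    (hg : (F g : α → ℂ) =ᵐ[μ] m * F f) : g ∈ S := by
  obtain ⟨g', hg'S, hg'⟩ := h f hf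
  rwa [F.injective (Lp.ext (hg.trans hg'.symm))]

theorem multiplierInvariant_iff (hm : MemLp m ∞ μ) :
    MultiplierInvariant F S m ↔ ∀ f ∈ S, ∀ g, (F g : α → ℂ) =ᵐ[μ] m * F f → g ∈ S := by
  refine ⟨fun h f hf g hg => h.mem hf hg, fun h f hf => ?_⟩
  obtain ⟨g, hg⟩ := F.exists_coeFn_eq_mul hm f
  exact ⟨g, h f hf g hg, hg⟩

namespace MultiplierInvariant

theorem mul (h₁ : MultiplierInvariant F S m₁) (h₂ : MultiplierInvariant F S m₂) :
    MultiplierInvariant F S (m₁ * m₂) := by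
  intro f hf
  obtain ⟨g₂, hg₂S, hg₂⟩ := h₂ f hf
  obtain ⟨g, hgS, hg⟩ := h₁ g₂ hg₂S
  refine ⟨g, hgS, ?_⟩
  filter_upwards [hg, hg₂] with x hx hx₂
  simp only [hx, Pi.mul_apply, hx₂, mul_assoc]

theorem zero : MultiplierInvariant F S 0 := by
  refine fun _ _ => ⟨0, S.zero_mem, ?_⟩
  rw [map_zero]
  filter_upwards [Lp.coeFn_zero ℂ p μ] with x hx
  rw [hx, Pi.mul_apply, Pi.zero_apply, zero_mul]

theorem add (h₁ : MultiplierInvariant F S m₁) (h₂ : MultiplierInvariant F S m₂) :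
    MultiplierInvariant F S (m₁ + m₂) := by
  intro f hf
  obtain ⟨g₁, hg₁S, hg₁⟩ := h₁ f hf
  obtain ⟨g₂, hg₂S, hg₂⟩ := h₂ f hf
  refine ⟨g₁ + g₂, S.add_mem hg₁S hg₂S, ?_⟩
  filter_upwards [(map_add F g₁ g₂).symm ▸ Lp.coeFn_add (F g₁) (F g₂), hg₁, hg₂]
    with x hx hx₁ hx₂
  simp only [hx, Pi.add_apply, hx₁, hx₂, Pi.mul_apply, add_mul]

theorem const_smul (c : ℂ) (h : MultiplierInvariant F S m) : MultiplierInvariant F S (c • m) := by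
  intro f hf
  obtain ⟨g, hgS, hg⟩ := h f hf
  refine ⟨c • g, S.smul_mem c hgS, ?_⟩
  filter_upwards [(map_smul F c g).symm ▸ Lp.coeFn_smul c (F g), hg] with x hx hx'
  simp only [hx, Pi.smul_apply, hx', Pi.mul_apply, smul_eq_mul, mul_assoc]

theorem sum {ι : Type*} (s : Finset ι) {m : ι → α → ℂ}
    (h : ∀ i ∈ s, MultiplierInvariant F S (m i)) :
    MultiplierInvariant F S (∑ i ∈ s, m i) :=
  Finset.sum_induction _ _ (fun _ _ => add) zero h

theorem of_tendsto (hS : IsClosed (S : Set E)) (hp : p ≠ ∞) {m : ℕ → α → ℂ} {M : α → ℂ}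
    (h : ∀ N, MultiplierInvariant F S (m N)) (hmeas : ∀ N, AEStronglyMeasurable (m N) μ)
    (C : ℝ) (hC : ∀ N, ∀ᵐ x ∂μ, ‖m N x‖ ≤ C)
    (hlim : ∀ᵐ x ∂μ, Tendsto (m · x) atTop (𝓝 (M x))) :
    MultiplierInvariant F S M := by
  have hCM : ∀ᵐ x ∂μ, ‖M x‖ ≤ C := by
    filter_upwards [ae_all_iff.mpr hC, hlim] with x hx hx'
    exact le_of_tendsto' hx'.norm hx
  have hM : MemLp M ∞ μ :=
    memLp_top_of_bound (aestronglyMeasurable_of_tendsto_ae _ hmeas hlim) C hCM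
  rw [multiplierInvariant_iff hM]
  intro f hf G hG
  choose g hgS hg using fun N => h N f hf
  have hFg : Tendsto (fun N => F (g N)) atTop (𝓝 (F G)) := by
    rw [Lp.tendsto_Lp_iff_tendsto_eLpNorm']
    refine tendsto_eLpNorm_of_dominated hp (g := fun N x => (m N x - M x) * F f x)
      (fun N => ((hmeas N).sub hM.1).mul (Lp.aestronglyMeasurable _))
      ((Lp.memLp (F f)).norm.const_mul (2 * C)) (fun N => ?_) ?_ |>.congr' ?_
    · filter_upwards [hC N, hCM] with x hx hxM
      rw [norm_mul]
      exact mul_le_mul_of_nonneg_right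
        ((norm_sub_le _ _).trans (by linarith)) (norm_nonneg _)
    · filter_upwards [hlim] with x hx
      simpa using (hx.sub_const (M x)).mul_const (F f x)
    · refine Eventually.of_forall fun N => eLpNorm_congr_ae ?_
      filter_upwards [hg N, hG] with x hx hxG
      simp only [Pi.sub_apply, hx, hxG, Pi.mul_apply, sub_mul]
  have hgG : Tendsto g atTop (𝓝 G) := by
    simpa [Function.comp_def] using (F.symm.continuous.tendsto _).comp hFg
  exact hS.mem_of_tendsto hgG (Eventually.of_forall hgS)

end MultiplierInvariant

end Multiplier

theorem inner_eq_zero_of_coeFn_eq_indicator {α E : Type*} [MeasurableSpace α] {μ : Measure α}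
    [NormedAddCommGroup E] [InnerProductSpace ℂ E] (F : E ≃ₗᵢ[ℂ] Lp ℂ 2 μ) {s t : Set α}
    (hst : Disjoint s t) {u v : E} {φ ψ : α → ℂ} (hu : (F u : α → ℂ) =ᵐ[μ] s.indicator φ)
    (hv : (F v : α → ℂ) =ᵐ[μ] t.indicator ψ) : (inner ℂ u v : ℂ) = 0 := by
  rw [← F.inner_map_map, L2.inner_def]
  refine integral_eq_zero_of_ae ?_
  filter_upwards [hu, hv] with x hux hvx
  rw [hux, hvx]
  by_cases hx : x ∈ s
  · rw [Set.indicator_of_notMem (Set.disjoint_left.mp hst hx), inner_zero_right, Pi.zero_apply]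
  · rw [Set.indicator_of_notMem hx, inner_zero_left, Pi.zero_apply]

theorem Real.fourierChar_add_intCast (x : ℝ) (m : ℤ) : 𝐞 (x + m) = 𝐞 x := by
  have h1 : 𝐞 1 = 1 := by rw [Real.fourierChar_apply', mul_one, Circle.exp_two_pi]
  rw [AddChar.map_add_eq_mul, ← mul_one (m : ℝ), ← zsmul_eq_mul, AddChar.map_zsmul_eq_zpow, h1,
    one_zpow, mul_one]

theorem Real.fourierChar_mul_fourierChar (x y : ℝ) : (𝐞 x : ℂ) * 𝐞 y = 𝐞 (x + y) := by
  rw [← Circle.coe_mul, ← AddChar.map_add_eq_mul]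

theorem Real.isPrimitiveRoot_fourierChar_inv {n : ℕ} (hn : n ≠ 0) :
    IsPrimitiveRoot ((𝐞 (n : ℝ)⁻¹ : Circle) : ℂ) n := by
  convert Complex.isPrimitiveRoot_exp n hn using 2
  rw [Real.fourierChar_apply]
  congr 1
  push_cast
  ring

theorem IsPrimitiveRoot.sum_range_zpow_mul {K : Type*} [Field K] {ζ : K} {n : ℕ}
    (hζ : IsPrimitiveRoot ζ n) (m : ℤ) :
    ∑ j ∈ Finset.range n, ζ ^ ((j : ℤ) * m) = if (n : ℤ) ∣ m then (n : K) else 0 := by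
  simp_rw [mul_comm _ m, zpow_mul, zpow_natCast]
  split_ifs with hm
  · simp [(hζ.zpow_eq_one_iff_dvd m).mpr hm]
  · rw [geom_sum_eq (mt (hζ.zpow_eq_one_iff_dvd m).mp hm), ← zpow_natCast, ← zpow_mul,
      mul_comm, zpow_mul, zpow_natCast, hζ.pow_eq_one, one_zpow, sub_self, zero_div]

theorem Real.sum_range_fourierChar_mul_div {n : ℕ} (hn : n ≠ 0) (m : ℤ) :
    ∑ j ∈ Finset.range n, (𝐞 (j * m / n) : ℂ) = if (n : ℤ) ∣ m then (n : ℂ) else 0 := by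
  rw [← (Real.isPrimitiveRoot_fourierChar_inv hn).sum_range_zpow_mul m]
  refine Finset.sum_congr rfl fun j _ => ?_
  rw [← Circle.coe_zpow, ← AddChar.map_zsmul_eq_zpow, zsmul_eq_mul]
  push_cast
  ring_nf

def translationSymbol (a ω : ℝ) : ℂ := 𝐞 (-(a * ω))

theorem memLp_top_translationSymbol (a : ℝ) : MemLp (translationSymbol a) ∞ volume :=
  memLp_top_of_bound (by unfold translationSymbol; fun_prop : Continuous _).aestronglyMeasurable 1
    (Eventually.of_forall fun ω => (Circle.norm_coe _).le)

theorem Real.fourier_comp_sub_right (f : ℝ → ℂ) (a : ℝ) :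
    𝓕 (fun x => f (x - a)) = translationSymbol a * 𝓕 f := by
  ext w
  have hshift := integral_sub_right_eq_self (μ := volume)
    (fun x => (𝐞 (-((x + a) * w)) : ℂ) * f x) a
  simp only [sub_add_cancel] at hshift
  simp only [Real.fourier_real_eq, Circle.smul_def, smul_eq_mul, Pi.mul_apply, hshift,
    translationSymbol, ← integral_const_mul]
  congr 1 with x
  rw [← mul_assoc, ← Circle.coe_mul, ← AddChar.map_add_eq_mul]
  ring_nf

theorem integrable_Tr {f : L2} (hf : Integrable (f : ℝ → ℂ) volume) (a : ℝ) :
    Integrable (Tr a f : ℝ → ℂ) volume := by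
  have hmp := measurePreserving_sub_right (volume : Measure ℝ) a
  exact ((hmp.integrable_comp (Lp.aestronglyMeasurable f)).mpr hf).congr
    (Lp.coeFn_compMeasurePreserving f hmp).symm

theorem IsFourierTransform.coeFn_Tr {F : L2 ≃ₗᵢ[ℂ] L2} (hF : IsFourierTransform F) (a : ℝ)
    (f : L2) : (F (Tr a f) : ℝ → ℂ) =ᵐ[volume] translationSymbol a * F f := by
  let φ : Lp ℂ ∞ (volume : Measure ℝ) := (memLp_top_translationSymbol a).toLp
  let M : L2 →L[ℂ] L2 := (ContinuousLinearMap.mul ℂ ℂ).holderL volume ∞ 2 2 φ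
  have hφ : (φ : ℝ → ℂ) =ᵐ[volume] translationSymbol a := MemLp.coeFn_toLp _
  have hM : ∀ g : L2, (M g : ℝ → ℂ) =ᵐ[volume] translationSymbol a * g := fun g => by
    filter_upwards [(ContinuousLinearMap.mul ℂ ℂ).coeFn_holder (r := 2) φ g, hφ] with x hx hφx
    rw [Pi.mul_apply, ← hφx]
    exact hx
  suffices (fun f => F (Tr a f)) = fun f => M (F f) by
    rw [show F (Tr a f) = M (F f) from congrFun this f]
    exact hM _
  have hTr : Continuous (Tr a) := (Lp.isometry_compMeasurePreserving _).continuous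
  refine Continuous.ext_on (Lp.simpleFunc.denseRange (p := 2) (by norm_num))
    (F.continuous.comp hTr) (M.continuous.comp F.continuous) ?_
  rintro _ ⟨s, rfl⟩
  have hs : Integrable ((s : L2) : ℝ → ℂ) volume := by
    have h := Lp.simpleFunc.toSimpleFunc_eq_toFun s
    exact ((SimpleFunc.memLp_iff_integrable two_ne_zero (by norm_num)).mp
      ((Lp.memLp (s : L2)).ae_eq h.symm)).congr h
  refine Lp.ext ?_
  calc (F (Tr a s) : ℝ → ℂ)
      =ᵐ[volume] 𝓕 (Tr a s : ℝ → ℂ) := hF _ (integrable_Tr hs a)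
    _ = 𝓕 (fun x => ((s : L2) : ℝ → ℂ) (x - a)) :=
        funext (Real.fourier_congr_ae (Lp.coeFn_compMeasurePreserving _ _))
    _ = translationSymbol a * 𝓕 ((s : L2) : ℝ → ℂ) := Real.fourier_comp_sub_right _ a
    _ =ᵐ[volume] translationSymbol a * F s := (hF _ hs).symm.mul_left
    _ =ᵐ[volume] M (F s) := (hM _).symm

section Periodic

variable {F : L2 ≃ₗᵢ[ℂ] L2} {S : Submodule ℂ L2}

theorem multiplierInvariant_translationSymbol_iff (hF : IsFourierTransform F) {a : ℝ} :
    MultiplierInvariant F S (translationSymbol a) ↔ ∀ f ∈ S, Tr a f ∈ S :=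
  ⟨fun h f hf => h.mem hf (hF.coeFn_Tr a f), fun h f hf => ⟨Tr a f, h f hf, hF.coeFn_Tr a f⟩⟩

theorem multiplierInvariant_of_mem_span_fourier (hF : IsFourierTransform F)
    (hinv : ∀ f ∈ S, ∀ j : ℤ, Tr (j : ℝ) f ∈ S) {P : C(AddCircle (1 : ℝ), ℂ)}
    (hP : P ∈ Submodule.span ℂ (Set.range fourier)) :
    MultiplierInvariant F S (fun ω : ℝ => P ω) := by
  induction hP using Submodule.span_induction with
  | mem _ hP =>
    obtain ⟨ℓ, rfl⟩ := hP
    have hfourier : (fun ω : ℝ => fourier ℓ (ω : AddCircle (1 : ℝ))) = translationSymbol (-ℓ) := by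
      ext ω
      rw [fourier_coe_apply, translationSymbol, Real.fourierChar_apply]
      push_cast
      ring_nf
    exact hfourier ▸ (multiplierInvariant_translationSymbol_iff hF).mpr fun f hf => by
      simpa using hinv f hf (-ℓ)
  | zero => exact MultiplierInvariant.zero
  | add _ _ _ _ h₁ h₂ => exact h₁.add h₂
  | smul c _ _ h => exact h.const_smul c

theorem multiplierInvariant_of_continuous (hF : IsFourierTransform F) (hS : IsClosed (S : Set L2))
    (hinv : ∀ f ∈ S, ∀ j : ℤ, Tr (j : ℝ) f ∈ S) (P : C(AddCircle (1 : ℝ), ℂ)) :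
    MultiplierInvariant F S (fun ω : ℝ => P ω) := by
  have : Fact ((0 : ℝ) < 1) := ⟨one_pos⟩
  have hP : P ∈ closure (Submodule.span ℂ (Set.range (fourier (T := 1))) : Set _) := by
    rw [← Submodule.topologicalClosure_coe, span_fourier_closure_eq_top]
    trivial
  obtain ⟨Q, hQspan, hQ⟩ := mem_closure_iff_seq_limit.mp hP
  obtain ⟨C, hC⟩ := hQ.norm.bddAbove_range
  refine .of_tendsto hS (by norm_num) (m := fun N (ω : ℝ) => Q N ω)
    (fun N => multiplierInvariant_of_mem_span_fourier hF hinv (hQspan N))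
    (fun N => ((Q N).continuous.comp (AddCircle.continuous_mk' 1)).aestronglyMeasurable) C
    (fun N => Eventually.of_forall fun ω => ((Q N).norm_coe_le_norm ω).trans (hC ⟨N, rfl⟩))
    (Eventually.of_forall fun ω => ?_)
  exact (continuous_eval_const (ω : AddCircle (1 : ℝ))).tendsto P |>.comp hQ

theorem multiplierInvariant_comp_fract (hF : IsFourierTransform F) (hS : IsClosed (S : Set L2))
    (hinv : ∀ f ∈ S, ∀ j : ℤ, Tr (j : ℝ) f ∈ S) {g : ℝ → ℂ} (hg : Continuous g) :
    MultiplierInvariant F S (fun ω => g (Int.fract ω)) := by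
  have : Fact ((0 : ℝ) < 1) := ⟨one_pos⟩
  -- `h N` equals `g` on `[0, 1 - 1/(N+1)]` and `g 0` at both endpoints: it descends to the circle.
  let h : ℕ → ℝ → ℂ := fun N t => g (t * min 1 ((N + 1) * (1 - t)))
  have hper : ∀ N, h N 0 = h N 1 := fun N => by simp [h]
  let P : ℕ → C(AddCircle (1 : ℝ), ℂ) := fun N =>
    ⟨AddCircle.liftIco 1 0 (h N), AddCircle.liftIco_zero_continuous (hper N)
      (by fun_prop : Continuous (h N)).continuousOn⟩
  have hP : ∀ N (ω : ℝ), P N ω = h N (Int.fract ω) := fun N ω => by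
    rw [← AddCircle.coe_fract ω]
    show AddCircle.liftIco 1 0 (h N) _ = _
    exact AddCircle.liftIco_zero_coe_apply ⟨Int.fract_nonneg ω, Int.fract_lt_one ω⟩
  obtain ⟨C, hC⟩ :=
    isCompact_Icc.exists_bound_of_continuousOn (s := Set.Icc (0 : ℝ) 1) hg.continuousOn
  refine .of_tendsto hS (by norm_num) (m := fun N (ω : ℝ) => P N ω)
    (fun N => multiplierInvariant_of_continuous hF hS hinv (P N))
    (fun N => ((P N).continuous.comp (AddCircle.continuous_mk' 1)).aestronglyMeasurable) C
    (fun N => Eventually.of_forall fun ω => ?_) (Eventually.of_forall fun ω => ?_)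
  · have ht := Int.fract_nonneg ω
    have ht' := Int.fract_lt_one ω
    rw [hP]
    refine hC _ ⟨mul_nonneg ht (le_min zero_le_one (by positivity)), ?_⟩
    exact mul_le_one₀ ht'.le (le_min zero_le_one (by nlinarith)) (min_le_left _ _)
  · refine tendsto_const_nhds.congr' ?_
    have ht' : 0 < 1 - Int.fract ω := sub_pos.mpr (Int.fract_lt_one ω)
    filter_upwards [eventually_ge_atTop ⌈(1 - Int.fract ω)⁻¹⌉₊] with N hN
    have hmin : 1 ≤ ((N : ℝ) + 1) * (1 - Int.fract ω) := by
      refine (div_le_iff₀ ht').mp ?_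
      rw [one_div]
      exact (Nat.ceil_le.mp hN).trans (le_add_of_nonneg_right zero_le_one)
    simp only [hP, h, min_eq_left hmin, mul_one]

end Periodic

section Blocks

variable {n k : ℕ}

theorem mem_Bset_iff {ω : ℝ} : ω ∈ Bset n k ↔ (k : ℤ) ≡ ⌊ω⌋ [ZMOD n] := by
  simp only [Bset, Set.mem_ofPred_eq, Set.mem_Ico, Int.modEq_iff_dvd]
  constructor
  · rintro ⟨j, hj⟩
    have hfloor : ⌊ω - ((n * j : ℤ) : ℝ)⌋ = k :=
      Int.floor_eq_iff.mpr (by push_cast; exact hj)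
    rw [Int.floor_sub_intCast] at hfloor
    exact ⟨j, by omega⟩
  · rintro ⟨j, hj⟩
    have hω : ((⌊ω⌋ : ℤ) : ℝ) = k + n * j := by rw [← sub_eq_iff_eq_add']; exact_mod_cast hj
    refine ⟨j, ?_, ?_⟩ <;> linarith [Int.floor_le ω, Int.lt_floor_add_one ω]

theorem measurableSet_Bset : MeasurableSet (Bset n k) := by
  have : Bset n k = Int.floor ⁻¹' {z | (k : ℤ) ≡ z [ZMOD n]} := Set.ext fun _ => mem_Bset_iff
  exact this ▸ Int.measurable_floor (MeasurableSet.of_discrete)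

theorem memLp_top_indicator_Bset : MemLp ((Bset n k).indicator (1 : ℝ → ℂ)) ∞ volume :=
  memLp_top_of_bound ((measurable_const.indicator measurableSet_Bset).aestronglyMeasurable) 1
    (Eventually.of_forall fun _ => (norm_indicator_le_norm_self _ _).trans (by simp))

theorem disjoint_Bset {l : ℕ} (hk : k < n) (hl : l < n) (hkl : k ≠ l) :
    Disjoint (Bset n k) (Bset n l) :=
  Set.disjoint_left.mpr fun _ hωk hωl => hkl <|
    (Int.natCast_modEq_iff.mp ((mem_Bset_iff.mp hωk).trans (mem_Bset_iff.mp hωl).symm))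
      |>.eq_of_lt_of_lt hk hl

theorem sum_range_mul_indicator_Bset (hn : 0 < n) {c : ℤ → ℂ}
    (hc : ∀ a b, a ≡ b [ZMOD n] → c a = c b) (ω : ℝ) :
    ∑ k ∈ Finset.range n, c k * (Bset n k).indicator 1 ω = c ⌊ω⌋ := by
  have hn' : (0 : ℤ) < n := by exact_mod_cast hn
  set k₀ := (⌊ω⌋ % n).toNat
  have hk₀ : (k₀ : ℤ) = ⌊ω⌋ % n := Int.toNat_of_nonneg (Int.emod_nonneg _ hn'.ne')
  have hk₀ω : (k₀ : ℤ) ≡ ⌊ω⌋ [ZMOD n] := hk₀ ▸ Int.mod_modEq _ _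
  have hk₀n : k₀ < n := by have := Int.emod_lt_of_pos ⌊ω⌋ hn'; omega
  rw [Finset.sum_eq_single_of_mem k₀ (Finset.mem_range.mpr hk₀n)]
  · rw [Set.indicator_of_mem (mem_Bset_iff.mpr hk₀ω), Pi.one_apply, mul_one, hc _ _ hk₀ω]
  · intro k hk hkk₀
    have hωk : ω ∉ Bset n k := fun hωk =>
      (disjoint_Bset (Finset.mem_range.mp hk) hk₀n hkk₀).ne_of_mem hωk (mem_Bset_iff.mpr hk₀ω) rfl
    rw [Set.indicator_of_notMem hωk, mul_zero]

end Blocks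

theorem indicator_Bset_eq_sum {n : ℕ} (hn : 0 < n) (k : ℕ) (ω : ℝ) :
    (Bset n k).indicator 1 ω = ∑ j ∈ Finset.range n,
      ((n : ℂ)⁻¹ * 𝐞 (j * k / n)) * (𝐞 (j / n * Int.fract ω) * translationSymbol (j / n) ω) := by
  have hterm : ∀ j : ℕ, ((n : ℂ)⁻¹ * 𝐞 (j * k / n)) *
      (𝐞 (j / n * Int.fract ω) * translationSymbol (j / n) ω) =
      (n : ℂ)⁻¹ * 𝐞 (j * ((k - ⌊ω⌋ : ℤ) : ℝ) / n) := fun j => by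
    rw [translationSymbol, Real.fourierChar_mul_fourierChar, mul_assoc,
      Real.fourierChar_mul_fourierChar, Int.fract]
    push_cast
    ring_nf
  classical
  rw [Finset.sum_congr rfl fun j _ => hterm j, ← Finset.mul_sum,
    Real.sum_range_fourierChar_mul_div hn.ne', Set.indicator_apply]
  simp only [mem_Bset_iff, Int.modEq_iff_dvd, dvd_sub_comm, Pi.one_apply]
  split_ifs <;> simp [hn.ne']

theorem translationSymbol_div_eq_sum {n : ℕ} (hn : 0 < n) (j : ℤ) (ω : ℝ) :
    translationSymbol (j / n) ω = ∑ k ∈ Finset.range n,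
      (𝐞 (-(j * k / n)) : ℂ) * (𝐞 (-(j / n * Int.fract ω)) * (Bset n k).indicator 1 ω) := by
  have hsum := sum_range_mul_indicator_Bset hn
    (c := fun z => (𝐞 (-(j * z / n) + -(j / n * Int.fract ω)) : ℂ)) (fun a b hab => ?_) ω
  · simp only [Int.cast_natCast] at hsum
    simp_rw [← mul_assoc, Real.fourierChar_mul_fourierChar, hsum, translationSymbol, Int.fract]
    congr 2
    ring
  · obtain ⟨c, hc⟩ := hab.dvd
    rw [show b = a + n * c by omega, ← Real.fourierChar_add_intCast _ (-(j * c))]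
    congr 2
    push_cast
    field_simp
    ring

section FractionalShifts

variable {F : L2 ≃ₗᵢ[ℂ] L2} {S : Submodule ℂ L2} {n : ℕ}

theorem multiplierInvariant_indicator_Bset (hF : IsFourierTransform F)
    (hS : IsClosed (S : Set L2)) (hinv : ∀ f ∈ S, ∀ j : ℤ, Tr (j : ℝ) f ∈ S) (hn : 0 < n)
    (ha : ∀ f ∈ S, ∀ j : ℤ, Tr ((j : ℝ) / n) f ∈ S) (k : ℕ) :
    MultiplierInvariant F S ((Bset n k).indicator 1) := by
  have hfun : (Bset n k).indicator 1 = ∑ j ∈ Finset.range n, ((n : ℂ)⁻¹ * 𝐞 (j * k / n)) •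
      ((fun ω => (𝐞 (j / n * Int.fract ω) : ℂ)) * translationSymbol (j / n)) :=
    funext fun ω => by simp [Finset.sum_apply, indicator_Bset_eq_sum hn k ω]
  rw [hfun]
  refine .sum _ fun j _ => .const_smul _ (.mul ?_ ?_)
  · exact multiplierInvariant_comp_fract hF hS hinv (g := fun t => (𝐞 (j / n * t) : ℂ))
      (by fun_prop)
  · exact (multiplierInvariant_translationSymbol_iff hF).mpr fun f hf => by
      simpa using ha f hf j

theorem Tr_div_mem_of_multiplierInvariant_indicator_Bset (hF : IsFourierTransform F)
    (hS : IsClosed (S : Set L2)) (hinv : ∀ f ∈ S, ∀ j : ℤ, Tr (j : ℝ) f ∈ S) (hn : 0 < n)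
    (h : ∀ k < n, MultiplierInvariant F S ((Bset n k).indicator 1)) :
    ∀ f ∈ S, ∀ j : ℤ, Tr ((j : ℝ) / n) f ∈ S := by
  intro f hf j
  have hfun : translationSymbol (j / n) = ∑ k ∈ Finset.range n, (𝐞 (-(j * k / n)) : ℂ) •
      ((fun ω => (𝐞 (-(j / n * Int.fract ω)) : ℂ)) * (Bset n k).indicator 1) :=
    funext fun ω => by simp [Finset.sum_apply, translationSymbol_div_eq_sum hn j ω]
  refine (multiplierInvariant_translationSymbol_iff hF).mp ?_ f hf
  rw [hfun]
  refine .sum _ fun k hk => .const_smul _ (.mul ?_ (h k (Finset.mem_range.mp hk)))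
  exact multiplierInvariant_comp_fract hF hS hinv (g := fun t => (𝐞 (-(j / n * t)) : ℂ))
    (by fun_prop)

theorem multiplierInvariant_indicator_Bset_iff {k : ℕ} :
    MultiplierInvariant F S ((Bset n k).indicator 1) ↔
      ∀ f ∈ S, ∀ g : L2, (F g : ℝ → ℂ) =ᵐ[volume] (Bset n k).indicator (F f : ℝ → ℂ) → g ∈ S := by
  simp_rw [multiplierInvariant_iff memLp_top_indicator_Bset, Set.indicator_one_mul]

theorem exists_sum_mem_Uspace (hn : 0 < n) {f : L2} (hf : f ∈ S) :
    ∃ u : Fin n → L2, (∀ k : Fin n, u k ∈ Uspace F (S : Set L2) n k) ∧ f = ∑ k : Fin n, u k := by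
  choose u hu using fun k : Fin n =>
    F.exists_coeFn_eq_mul (memLp_top_indicator_Bset (n := n) (k := k)) f
  simp_rw [Set.indicator_one_mul] at hu
  refine ⟨u, fun k => ⟨f, hf, hu k⟩, F.injective (Lp.ext ?_)⟩
  rw [map_sum]
  filter_upwards [Lp.coeFn_finsetSum Finset.univ (fun k => F (u k)), ae_all_iff.mpr hu]
    with ω hsum hω
  rw [hsum, Finset.sum_apply]
  have hpart := sum_range_mul_indicator_Bset hn (c := fun _ => 1) (fun _ _ _ => rfl) ω
  simp only [one_mul] at hpart
  simp only [hω, ← Set.indicator_one_mul _ (F f : ℝ → ℂ), Pi.mul_apply, ← Finset.sum_mul]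
  rw [Fin.sum_univ_eq_sum_range (fun k => (Bset n k).indicator 1 ω), hpart, one_mul]

end FractionalShifts

/-- Characterization of `(1/n)ℤ`-invariance of a SIS `S` in terms of the subspaces `U_k`,
together with the orthogonal decomposition `S = U_0 ⊕ ⋯ ⊕ U_{n-1}`. -/
theorem stmt10 (F : L2 ≃ₗᵢ[ℂ] L2) (hF : IsFourierTransform F)
    (n : ℕ) (hn : 0 < n)
    (S : Submodule ℂ L2) (hS : IsClosed (S : Set L2))
    (hinv : ∀ f ∈ S, ∀ j : ℤ, Tr (j : ℝ) f ∈ S) :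
    (((∀ f ∈ S, ∀ j : ℤ, Tr ((j : ℝ) / n) f ∈ S) ↔
        (∀ k < n, Uspace F (S : Set L2) n k ⊆ (S : Set L2))) ∧
     ((∀ f ∈ S, ∀ j : ℤ, Tr ((j : ℝ) / n) f ∈ S) ↔
        (∀ f ∈ S, ∀ k < n, ∀ g : L2,
          (F g : ℝ → ℂ) =ᵐ[volume] (Bset n k).indicator (F f : ℝ → ℂ) → g ∈ S))) ∧
    ((∀ f ∈ S, ∀ j : ℤ, Tr ((j : ℝ) / n) f ∈ S) →
      ((∀ f ∈ S, ∃ u : Fin n → L2, (∀ k : Fin n, u k ∈ Uspace F (S : Set L2) n k) ∧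
          f = ∑ k : Fin n, u k) ∧
       (∀ k l : Fin n, k ≠ l → ∀ u ∈ Uspace F (S : Set L2) n (k : ℕ),
          ∀ v ∈ Uspace F (S : Set L2) n (l : ℕ), (inner ℂ u v : ℂ) = 0))) := by
  have ha : (∀ f ∈ S, ∀ j : ℤ, Tr ((j : ℝ) / n) f ∈ S) ↔
      ∀ k < n, MultiplierInvariant F S ((Bset n k).indicator 1) :=
    ⟨fun ha k _ => multiplierInvariant_indicator_Bset hF hS hinv hn ha k,
      Tr_div_mem_of_multiplierInvariant_indicator_Bset hF hS hinv hn⟩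
  simp_rw [multiplierInvariant_indicator_Bset_iff] at ha
  refine ⟨⟨ha.trans ?_, ha.trans ?_⟩, fun _ => ⟨fun f hf => exists_sum_mem_Uspace hn hf, ?_⟩⟩
  · exact forall₂_congr fun k _ =>
      ⟨fun h g ⟨f, hf, hg⟩ => h f hf g hg, fun h f hf g hg => h ⟨f, hf, hg⟩⟩
  · exact ⟨fun h f hf k hk => h k hk f hf, fun h k hk f hf => h f hf k hk⟩
  · rintro k l hkl u ⟨_, -, hu⟩ v ⟨_, -, hv⟩
    exact inner_eq_zero_of_coeFn_eq_indicator F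
      (disjoint_Bset k.isLt l.isLt (Fin.val_ne_of_ne hkl)) hu hv
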